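/- If F(a,b) is a formal power series in variables a, b over R[[q]] with F(0,0) = 1 satisfying the functional equation F(a,b) = (1+aq)·F(b, aq), then F(a,b) = ∏_{k≥1} (1 + aq^k)(1 + bq^k). -/

import Mathlib

open MvPowerSeries

/-- The substitution F(a,b,q) ↦ F(b,aq,q) on formal power series in
a = X 0, b = X 1, q = X 2 (i.e. swap the two variables a and b, and multiply
the variable substituted for b by q). -/
noncomputable def swapSub (F : MvPowerSeries (Fin 3) ℚ) : MvPowerSeries (Fin 3) ℚ :=
  fun e => if e 0 ≤ e 2 then
    MvPowerSeries.coeff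
      (Finsupp.single 0 (e 1) + Finsupp.single 1 (e 0) + Finsupp.single 2 (e 2 - e 0)) F
  else 0

/-! ### Auxiliary infrastructure -/

/-- The exponent `a^u b^v q^n`. -/
noncomputable def E (u v n : ℕ) : Fin 3 →₀ ℕ :=
  Finsupp.single 0 u + Finsupp.single 1 v + Finsupp.single 2 n

lemma E_apply (u v n : ℕ) : (E u v n) 0 = u ∧ (E u v n) 1 = v ∧ (E u v n) 2 = n := by
  simp [E, Finsupp.single_apply]

lemma E0 (u v n : ℕ) : (E u v n) 0 = u := (E_apply u v n).1
lemma E1 (u v n : ℕ) : (E u v n) 1 = v := (E_apply u v n).2.1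
lemma E2 (u v n : ℕ) : (E u v n) 2 = n := (E_apply u v n).2.2

lemma eq_E (e : Fin 3 →₀ ℕ) : e = E (e 0) (e 1) (e 2) := by
  ext i; fin_cases i <;> simp [E, Finsupp.single_apply]

lemma E_inj {u v n u' v' n' : ℕ} : E u v n = E u' v' n' ↔ u = u' ∧ v = v' ∧ n = n' := by
  constructor
  · intro h
    have h0 := DFunLike.congr_fun h 0
    have h1 := DFunLike.congr_fun h 1
    have h2 := DFunLike.congr_fun h 2
    simp [E, Finsupp.single_apply] at h0 h1 h2
    exact ⟨h0, h1, h2⟩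
  · rintro ⟨rfl, rfl, rfl⟩; rfl

lemma E_add (u v n u' v' n' : ℕ) : E u v n + E u' v' n' = E (u+u') (v+v') (n+n') := by
  ext i; fin_cases i <;> simp [E, Finsupp.single_apply]

lemma E_zero : E 0 0 0 = 0 := by ext i; fin_cases i <;> simp [E]

lemma E_sub (u v n u' v' n' : ℕ) : E u v n - E u' v' n' = E (u-u') (v-v') (n-n') := by
  ext i; fin_cases i <;> simp [E, Finsupp.single_apply]

lemma E_le {u v n u' v' n' : ℕ} : E u v n ≤ E u' v' n' ↔ u ≤ u' ∧ v ≤ v' ∧ n ≤ n' := by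
  rw [Finsupp.le_def]
  constructor
  · intro h
    have h0 := h 0; have h1 := h 1; have h2 := h 2
    simp [E, Finsupp.single_apply] at h0 h1 h2
    exact ⟨h0, h1, h2⟩
  · rintro ⟨h0, h1, h2⟩ i; fin_cases i <;> simpa [E, Finsupp.single_apply]

lemma E00 (n : ℕ) : E 0 0 n = Finsupp.single 2 n := by
  ext i; fin_cases i <;> simp [E, Finsupp.single_apply]

/-! ### `swapSub` is a ring homomorphism -/

lemma coeff_swapSub (F : MvPowerSeries (Fin 3) ℚ) (u v n : ℕ) :
    coeff (E u v n) (swapSub F) = if u ≤ n then coeff (E v u (n - u)) F else 0 := by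
  rw [coeff_apply]
  show (if (E u v n) 0 ≤ (E u v n) 2 then
      coeff (E ((E u v n) 1) ((E u v n) 0) ((E u v n) 2 - (E u v n) 0)) F else 0) = _
  rw [E0, E1, E2]

lemma coeff_swapSub' (F : MvPowerSeries (Fin 3) ℚ) (e : Fin 3 →₀ ℕ) :
    coeff e (swapSub F) =
      if e 0 ≤ e 2 then coeff (E (e 1) (e 0) (e 2 - e 0)) F else 0 := rfl

lemma swapSub_add (F G : MvPowerSeries (Fin 3) ℚ) :
    swapSub (F + G) = swapSub F + swapSub G := by
  apply MvPowerSeries.ext; intro e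
  obtain ⟨u, v, n, rfl⟩ : ∃ u v n, e = E u v n := ⟨_, _, _, eq_E e⟩
  rw [map_add, coeff_swapSub, coeff_swapSub, coeff_swapSub]
  split <;> simp

lemma swapSub_monomial (u v n : ℕ) (r : ℚ) :
    swapSub (monomial (E u v n) r) = monomial (E v u (n + v)) r := by
  apply MvPowerSeries.ext; intro e
  obtain ⟨u', v', n', rfl⟩ : ∃ u v n, e = E u v n := ⟨_, _, _, eq_E e⟩
  rw [coeff_swapSub]
  by_cases h : u' ≤ n'
  · rw [if_pos h, coeff_monomial, coeff_monomial]
    by_cases h2 : v' = u ∧ u' = v ∧ n' - u' = n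
    · rw [if_pos (E_inj.mpr h2), if_pos (E_inj.mpr (by omega))]
    · rw [if_neg (fun hh => h2 (E_inj.mp hh)),
        if_neg (fun hh => by have := E_inj.mp hh; omega)]
  · rw [if_neg h, coeff_monomial,
      if_neg (fun hh => by have := E_inj.mp hh; omega)]

lemma swapSub_one : swapSub 1 = 1 := by
  have h := swapSub_monomial 0 0 0 1
  rwa [E_zero, monomial_zero_one] at h

lemma mem_antidiagonal_E {p : (Fin 3 →₀ ℕ) × (Fin 3 →₀ ℕ)} {u v n : ℕ} :
    p ∈ Finset.HasAntidiagonal.antidiagonal (E u v n) ↔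
      p.1 0 + p.2 0 = u ∧ p.1 1 + p.2 1 = v ∧ p.1 2 + p.2 2 = n := by
  rw [Finset.HasAntidiagonal.mem_antidiagonal]
  constructor
  · intro h
    have h0 := DFunLike.congr_fun h 0
    have h1 := DFunLike.congr_fun h 1
    have h2 := DFunLike.congr_fun h 2
    simp only [Finsupp.add_apply] at h0 h1 h2
    rw [E0] at h0; rw [E1] at h1; rw [E2] at h2
    exact ⟨h0, h1, h2⟩
  · rintro ⟨h0, h1, h2⟩
    have e1 := eq_E p.1
    have e2 := eq_E p.2
    rw [e1, e2, E_add, E_inj]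
    exact ⟨h0, h1, h2⟩

lemma swapSub_mul (F G : MvPowerSeries (Fin 3) ℚ) :
    swapSub (F * G) = swapSub F * swapSub G := by
  apply MvPowerSeries.ext; intro e
  obtain ⟨u, v, n, rfl⟩ : ∃ u v n, e = E u v n := ⟨_, _, _, eq_E e⟩
  rw [coeff_swapSub]
  by_cases h : u ≤ n
  · rw [if_pos h, coeff_mul, coeff_mul]
    symm
    rw [← Finset.sum_filter_of_ne
      (p := fun p : (Fin 3 →₀ ℕ) × (Fin 3 →₀ ℕ) => p.1 0 ≤ p.1 2 ∧ p.2 0 ≤ p.2 2)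
      (fun p _ hne => by
        by_contra hc
        rcases not_and_or.mp hc with h1 | h1 <;>
          rw [coeff_swapSub' F, coeff_swapSub' G] at hne
        · rw [if_neg h1, zero_mul] at hne; exact hne rfl
        · rw [if_neg h1, mul_zero] at hne; exact hne rfl)]
    refine Finset.sum_nbij'
      (i := fun p : (Fin 3 →₀ ℕ) × (Fin 3 →₀ ℕ) =>
        (E (p.1 1) (p.1 0) (p.1 2 - p.1 0), E (p.2 1) (p.2 0) (p.2 2 - p.2 0)))
      (j := fun q : (Fin 3 →₀ ℕ) × (Fin 3 →₀ ℕ) =>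
        (E (q.1 1) (q.1 0) (q.1 2 + q.1 1), E (q.2 1) (q.2 0) (q.2 2 + q.2 1)))
      ?_ ?_ ?_ ?_ ?_
    · intro p hp
      rw [Finset.mem_filter] at hp
      have hm := mem_antidiagonal_E.mp hp.1
      have hc := hp.2
      rw [mem_antidiagonal_E]
      simp only [E0, E1, E2]
      omega
    · intro q hq
      have hm := mem_antidiagonal_E.mp hq
      rw [Finset.mem_filter]
      refine ⟨?_, ?_⟩
      · rw [mem_antidiagonal_E]
        simp only [E0, E1, E2]
        omega
      · simp only [E0, E1, E2]
        omega
    · intro p hp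
      rw [Finset.mem_filter] at hp
      have hc := hp.2
      simp only [E0, E1, E2]
      refine Prod.ext ?_ ?_
      · show E (p.1 0) (p.1 1) (p.1 2 - p.1 0 + p.1 0) = p.1
        rw [Nat.sub_add_cancel hc.1]
        exact (eq_E p.1).symm
      · show E (p.2 0) (p.2 1) (p.2 2 - p.2 0 + p.2 0) = p.2
        rw [Nat.sub_add_cancel hc.2]
        exact (eq_E p.2).symm
    · intro q hq
      simp only [E0, E1, E2]
      refine Prod.ext ?_ ?_
      · show E (q.1 0) (q.1 1) (q.1 2 + q.1 1 - q.1 1) = q.1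
        rw [Nat.add_sub_cancel]
        exact (eq_E q.1).symm
      · show E (q.2 0) (q.2 1) (q.2 2 + q.2 1 - q.2 1) = q.2
        rw [Nat.add_sub_cancel]
        exact (eq_E q.2).symm
    · intro p hp
      rw [Finset.mem_filter] at hp
      rw [coeff_swapSub' F, coeff_swapSub' G, if_pos hp.2.1, if_pos hp.2.2]
  · rw [if_neg h, coeff_mul]
    symm
    refine Finset.sum_eq_zero fun p hp => ?_
    have hm := mem_antidiagonal_E.mp hp
    have hc : ¬(p.1 0 ≤ p.1 2 ∧ p.2 0 ≤ p.2 2) := by omega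
    rw [coeff_swapSub' F, coeff_swapSub' G]
    rcases not_and_or.mp hc with h1 | h1
    · rw [if_neg h1, zero_mul]
    · rw [if_neg h1, mul_zero]

/-! ### The factors and the finite products -/

lemma fact_a (k : ℕ) : (X 0 * X 2 ^ k : MvPowerSeries (Fin 3) ℚ) = monomial (E 1 0 k) 1 := by
  have h : Finsupp.single (0 : Fin 3) 1 + Finsupp.single 2 k = E 1 0 k := by
    ext i; fin_cases i <;> simp [E, Finsupp.single_apply]
  rw [X_pow_eq, X_def, monomial_mul_monomial, one_mul, h]

lemma fact_b (k : ℕ) : (X 1 * X 2 ^ k : MvPowerSeries (Fin 3) ℚ) = monomial (E 0 1 k) 1 := by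
  have h : Finsupp.single (1 : Fin 3) 1 + Finsupp.single 2 k = E 0 1 k := by
    ext i; fin_cases i <;> simp [E, Finsupp.single_apply]
  rw [X_pow_eq, X_def, monomial_mul_monomial, one_mul, h]

lemma fact_a1 : (X 0 * X 2 : MvPowerSeries (Fin 3) ℚ) = monomial (E 1 0 1) 1 := by
  have := fact_a 1; rwa [pow_one] at this

lemma swapSub_factor_a (k : ℕ) :
    swapSub (1 + X 0 * X 2 ^ k) = 1 + X 1 * X 2 ^ k := by
  rw [swapSub_add, swapSub_one, fact_a, swapSub_monomial, fact_b, Nat.add_zero]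

lemma swapSub_factor_b (k : ℕ) :
    swapSub (1 + X 1 * X 2 ^ k) = 1 + X 0 * X 2 ^ (k + 1) := by
  rw [swapSub_add, swapSub_one, fact_b, swapSub_monomial, fact_a]

/-- The finite product approximation. -/
noncomputable def P (n : ℕ) : MvPowerSeries (Fin 3) ℚ :=
  ∏ k ∈ Finset.Icc 1 n, ((1 + X 0 * X 2 ^ k) * (1 + X 1 * X 2 ^ k))

lemma P_succ (m : ℕ) :
    P (m+1) = P m * ((1 + X 0 * X 2 ^ (m+1)) * (1 + X 1 * X 2 ^ (m+1))) := by
  rw [P, P, Finset.prod_Icc_succ_top (by omega)]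

lemma key (m : ℕ) :
    P (m+1) = (1 + X 0 * X 2) * swapSub (P m) * (1 + X 1 * X 2 ^ (m+1)) := by
  induction m with
  | zero =>
    rw [P_succ, show P 0 = 1 from by simp [P], swapSub_one, pow_one]
    ring
  | succ m ih =>
    have h2 : swapSub (P (m+1)) =
        swapSub (P m) * ((1 + X 1 * X 2 ^ (m+1)) * (1 + X 0 * X 2 ^ (m+2))) := by
      rw [P_succ, swapSub_mul, swapSub_mul, swapSub_factor_a, swapSub_factor_b]
    rw [P_succ (m+1), h2, ih]
    ring

/-! ### Stabilization and support bounds -/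

lemma coeff_P_succ {u v n : ℕ} (m : ℕ) (h : n ≤ m) :
    coeff (E u v n) (P (m+1)) = coeff (E u v n) (P m) := by
  have expand : ((1 + X 0 * X 2 ^ (m+1)) * (1 + X 1 * X 2 ^ (m+1)) : MvPowerSeries (Fin 3) ℚ)
      = 1 + (monomial (E 1 0 (m+1)) 1 + (monomial (E 0 1 (m+1)) 1 +
        monomial (E 1 1 ((m+1)+(m+1))) 1)) := by
    have hab : (monomial (E 1 0 (m+1)) (1 : ℚ)) * (monomial (E 0 1 (m+1)) 1)
        = monomial (E 1 1 ((m+1)+(m+1))) 1 := by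
      rw [monomial_mul_monomial, E_add, one_mul]
    calc ((1 + X 0 * X 2 ^ (m+1)) * (1 + X 1 * X 2 ^ (m+1)) : MvPowerSeries (Fin 3) ℚ)
        = 1 + ((X 0 * X 2 ^ (m+1)) + ((X 1 * X 2 ^ (m+1)) +
            (X 0 * X 2 ^ (m+1)) * (X 1 * X 2 ^ (m+1)))) := by ring
      _ = _ := by rw [fact_a, fact_b, hab]
  rw [P_succ, expand, mul_add, mul_one, map_add, mul_add, map_add, mul_add, map_add,
    coeff_mul_monomial, coeff_mul_monomial, coeff_mul_monomial,
    if_neg (fun hh => by have := E_le.mp hh; omega),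
    if_neg (fun hh => by have := E_le.mp hh; omega),
    if_neg (fun hh => by have := E_le.mp hh; omega)]
  ring

lemma stab (u v n m : ℕ) (h : n ≤ m) :
    coeff (E u v n) (P m) = coeff (E u v n) (P n) := by
  induction m with
  | zero => rw [Nat.le_zero.mp h]
  | succ m ih =>
    rcases Nat.lt_or_ge n (m+1) with h' | h'
    · rw [coeff_P_succ m (by omega), ih (by omega)]
    · rw [show n = m + 1 by omega]

/-- Support bound for the products. -/
def Good (φ : MvPowerSeries (Fin 3) ℚ) : Prop :=
  ∀ e : Fin 3 →₀ ℕ, coeff e φ ≠ 0 → e 0 + e 1 ≤ e 2 ∧ (e 0 + e 1 = 0 → e 2 = 0)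

lemma good_one : Good 1 := by
  intro e he
  rw [coeff_one] at he
  have : e = 0 := by by_contra hc; rw [if_neg hc] at he; exact he rfl
  subst this
  simp

lemma good_mul {φ ψ : MvPowerSeries (Fin 3) ℚ} (hφ : Good φ) (hψ : Good ψ) : Good (φ * ψ) := by
  intro e he
  rw [coeff_mul] at he
  obtain ⟨p, hp, hne⟩ := Finset.exists_ne_zero_of_sum_ne_zero he
  have h1 := hφ p.1 (left_ne_zero_of_mul hne)
  have h2 := hψ p.2 (right_ne_zero_of_mul hne)
  have hm := Finset.HasAntidiagonal.mem_antidiagonal.mp hp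
  have hm0 := DFunLike.congr_fun hm 0
  have hm1 := DFunLike.congr_fun hm 1
  have hm2 := DFunLike.congr_fun hm 2
  simp only [Finsupp.add_apply] at hm0 hm1 hm2
  omega

lemma good_factor {u v k : ℕ} (hk : 1 ≤ k) (huv : u + v = 1) :
    Good (1 + monomial (E u v k) 1) := by
  intro e he
  rw [map_add, coeff_one, coeff_monomial] at he
  have : e = 0 ∨ e = E u v k := by
    by_contra hc
    push_neg at hc
    rw [if_neg hc.1, if_neg hc.2] at he
    exact he (by ring)
  rcases this with rfl | rfl
  · simp
  · rw [E0, E1, E2]; omega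

lemma good_P (m : ℕ) : Good (P m) := by
  rw [P]
  refine Finset.prod_induction _ Good (fun a b => good_mul) good_one ?_
  intro k hk
  have hk1 : 1 ≤ k := (Finset.mem_Icc.mp hk).1
  have ha : Good (1 + X 0 * X 2 ^ k) := by
    rw [fact_a]; exact good_factor hk1 (by omega)
  have hb : Good (1 + X 1 * X 2 ^ k) := by
    rw [fact_b]; exact good_factor hk1 (by omega)
  exact good_mul ha hb

/-! ### The recursions -/

lemma coeff_one_add_aq_mul (G : MvPowerSeries (Fin 3) ℚ) (u v n : ℕ) :
    coeff (E u v n) ((1 + X 0 * X 2) * G) =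
      coeff (E u v n) G +
        if 1 ≤ u ∧ 1 ≤ n then coeff (E (u-1) v (n-1)) G else 0 := by
  rw [add_mul, one_mul, map_add, fact_a1, coeff_monomial_mul, one_mul]
  congr 1
  by_cases hc : 1 ≤ u ∧ 1 ≤ n
  · rw [if_pos (E_le.mpr ⟨hc.1, by omega, hc.2⟩), if_pos hc, E_sub, Nat.sub_zero]
  · rw [if_neg (fun hh => by have := E_le.mp hh; omega), if_neg hc]

lemma rec_general (H : MvPowerSeries (Fin 3) ℚ) (u v n : ℕ) :
    coeff (E u v n) ((1 + X 0 * X 2) * swapSub H) =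
      (if u ≤ n then coeff (E v u (n-u)) H else 0) +
      (if 1 ≤ u ∧ u ≤ n then coeff (E v (u-1) (n-u)) H else 0) := by
  rw [coeff_one_add_aq_mul, coeff_swapSub]
  congr 1
  by_cases hc : 1 ≤ u ∧ 1 ≤ n
  · rw [if_pos hc, coeff_swapSub]
    by_cases h2 : u - 1 ≤ n - 1
    · rw [if_pos h2, if_pos (by omega), show n - 1 - (u - 1) = n - u by omega]
    · rw [if_neg h2, if_neg (by omega)]
  · rw [if_neg hc, if_neg (by omega)]

lemma rec_P (u v n : ℕ) :
    coeff (E u v n) (P n) =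
      (if u ≤ n then coeff (E v u (n-u)) (P (n-u)) else 0) +
      (if 1 ≤ u ∧ u ≤ n then coeff (E v (u-1) (n-u)) (P (n-u)) else 0) := by
  have h0 : coeff (E u v n) (P n) = coeff (E u v n) (P (n+1)) :=
    (coeff_P_succ n (le_refl n)).symm
  rw [h0, key n, fact_b, mul_add, mul_one, map_add, coeff_mul_monomial,
    if_neg (fun hh => by have := E_le.mp hh; omega), add_zero, rec_general]
  congr 1
  · by_cases h : u ≤ n
    · rw [if_pos h, if_pos h, stab v u (n-u) n (by omega)]
    · rw [if_neg h, if_neg h]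
  · by_cases h : 1 ≤ u ∧ u ≤ n
    · rw [if_pos h, if_pos h, stab v (u-1) (n-u) n (by omega)]
    · rw [if_neg h, if_neg h]

/-! ### The main theorem -/

lemma main_lemma (F : MvPowerSeries (Fin 3) ℚ)
    (hF : F = (1 + X 0 * X 2) * swapSub F)
    (hconst : ∀ n : ℕ, MvPowerSeries.coeff (Finsupp.single 2 n) F =
      if n = 0 then 1 else 0) :
    ∀ n u v : ℕ, coeff (E u v n) F = coeff (E u v n) (P n) := by
  intro n
  induction n using Nat.strong_induction_on with
  | _ n IH =>
  intro u v
  have recF : ∀ u v n : ℕ, coeff (E u v n) F =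
      (if u ≤ n then coeff (E v u (n-u)) F else 0) +
      (if 1 ≤ u ∧ u ≤ n then coeff (E v (u-1) (n-u)) F else 0) := fun u v n => by
    conv_lhs => rw [hF]
    exact rec_general F u v n
  have pzero : ∀ m : ℕ, coeff (E 0 0 m) (P m) = if m = 0 then 1 else 0 := by
    intro m
    by_cases hm : m = 0
    · subst hm
      rw [E_zero, if_pos rfl, show P 0 = 1 from by simp [P], coeff_one, if_pos rfl]
    · rw [if_neg hm]
      by_contra hc
      have := good_P m (E 0 0 m) hc
      rw [E0, E1, E2] at this
      omega
  rcases Nat.eq_zero_or_pos u with hu | hu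
  · subst hu
    have step1 : coeff (E 0 v n) F = coeff (E v 0 n) F := by
      rw [recF 0 v n, if_pos (Nat.zero_le n), if_neg (by omega), Nat.sub_zero, add_zero]
    have step1P : coeff (E 0 v n) (P n) = coeff (E v 0 n) (P n) := by
      rw [rec_P 0 v n, if_pos (Nat.zero_le n), if_neg (by omega), Nat.sub_zero, add_zero]
    rcases Nat.eq_zero_or_pos v with hv | hv
    · subst hv
      rw [pzero n, E00, hconst n]
    · rcases le_or_gt v n with hvn | hvn
      · rw [step1, step1P, recF v 0 n, rec_P v 0 n,
          if_pos hvn, if_pos hvn, if_pos ⟨hv, hvn⟩, if_pos ⟨hv, hvn⟩,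
          IH (n - v) (by omega) 0 v, IH (n - v) (by omega) 0 (v - 1)]
      · rw [step1, step1P, recF v 0 n, rec_P v 0 n,
          if_neg (by omega), if_neg (by omega), if_neg (by omega), if_neg (by omega)]
  · rcases le_or_gt u n with hun | hun
    · rw [recF u v n, rec_P u v n,
        if_pos hun, if_pos hun, if_pos ⟨hu, hun⟩, if_pos ⟨hu, hun⟩,
        IH (n - u) (by omega) v u, IH (n - u) (by omega) v (u - 1)]
    · rw [recF u v n, if_neg (by omega), if_neg (by omega), add_zero]
      symm
      by_contra hc
      have := good_P n (E u v n) (stab u v n n (le_refl n) ▸ hc)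
      rw [E0, E1, E2] at this
      omega

/-- The iteration argument of Section 2: if F(a,b) = (1+aq)·F(b,aq) and F(0,0) = 1,
then F(a,b) = ∏_{k≥1} (1+aq^k)(1+bq^k), stated coefficientwise (the factors with
k > n do not affect the coefficient of qⁿ). -/
theorem iteration_functional_equation (F : MvPowerSeries (Fin 3) ℚ)
    (hF : F = (1 + X 0 * X 2) * swapSub F)
    (hconst : ∀ n : ℕ, MvPowerSeries.coeff (Finsupp.single 2 n) F =
      if n = 0 then 1 else 0) :
    ∀ u v n : ℕ,
      MvPowerSeries.coeff
        (Finsupp.single 0 u + Finsupp.single 1 v + Finsupp.single 2 n) F =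
      MvPowerSeries.coeff
        (Finsupp.single 0 u + Finsupp.single 1 v + Finsupp.single 2 n)
        (∏ k ∈ Finset.Icc 1 n,
          ((1 + X 0 * X 2 ^ k) * (1 + X 1 * X 2 ^ k) : MvPowerSeries (Fin 3) ℚ)) := by
  intro u v n
  exact main_lemma F hF hconst n u v
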